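/- Under the stated coordinate setup, the linear transformation η : 𝔟 → 𝔟 defined by η(α) = γ(α) for α ∈ 𝔞, η(b) = b for b ∈ B, and η(b') = b' for b' ∈ B' is an antiautomorphism of order 2 of the algebra 𝔟 = 𝔞 ⊕ B ⊕ B', i.e. η(xy) = η(y)η(x) for all x, y ∈ 𝔟 and η² = id. -/

import Mathlib

attribute [instance 100] LieRing.ofAssociativeRing

namespace WG

variable (F : Type*) [Field F]
variable (L : Type*) [LieRing L] [LieAlgebra F L]

/-- The `α`-weight space of the `H`-module `L`:
`{x ∈ L | [h, x] = α(h) • x for all h ∈ H}`. -/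
def wt (H : LieSubalgebra F L) (α : Module.Dual F H) : Submodule F L where
  carrier := {x | ∀ h : H, ⁅(h : L), x⁆ = α h • x}
  add_mem' := by
    intro a b ha hb h
    rw [lie_add, ha h, hb h, smul_add]
  zero_mem' := by
    intro h
    rw [lie_zero, smul_zero]
  smul_mem' := by
    intro c x hx h
    rw [lie_smul, hx h]
    exact smul_comm c _ x

/-- The linear span of all brackets `⁅m, n⁆` with `m ∈ M`, `n ∈ N`. -/
def bracketSpan (M N : Submodule F L) : Submodule F L :=
  Submodule.span F {z | ∃ m ∈ M, ∃ n ∈ N, z = ⁅m, n⁆}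

/-- `H` is a Cartan subalgebra of the subalgebra `g`: it is a nilpotent subalgebra of `g`
which is self-normalizing in `g`. -/
def IsCartanIn (g H : LieSubalgebra F L) : Prop :=
  H ≤ g ∧ LieRing.IsNilpotent H ∧
    ∀ x ∈ g, (∀ h ∈ H, ⁅x, h⁆ ∈ H) → x ∈ H

/-- The set of roots of `g` relative to `H` (nonzero weights of the `H`-module `g`). -/
def rootSet (g H : LieSubalgebra F L) : Set (Module.Dual F H) :=
  {α | α ≠ 0 ∧ wt F L H α ⊓ g.toSubmodule ≠ ⊥}

/-- `H` is a splitting Cartan subalgebra of `g`: `g` is the sum of its `H`-weight spaces. -/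
def IsSplitIn (g H : LieSubalgebra F L) : Prop :=
  IsCartanIn F L g H ∧
    g.toSubmodule = ⨆ α : Module.Dual F H, (wt F L H α ⊓ g.toSubmodule)

/-- The Lie subalgebra `N` of `L` is `(Γ, g)`-pregraded relative to the
Cartan subalgebra `H` of `g`: conditions (Γ1) and (Γ2). -/
def IsPregraded (N g H : LieSubalgebra F L) (Γ : Set (Module.Dual F H)) : Prop :=
  g ≤ N ∧ IsCartanIn F L g H ∧ Γ.Finite ∧ (0 : Module.Dual F H) ∈ Γ ∧
    rootSet F L g H ⊆ Γ ∧
    N.toSubmodule = ⨆ α ∈ Γ, (wt F L H α ⊓ N.toSubmodule)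

/-- `Σ_{α, -α ∈ Γ \ {0}} ⁅N_α, N_{-α}⁆`. -/
def zeroPart (N H : LieSubalgebra F L) (Γ : Set (Module.Dual F H)) : Submodule F L :=
  ⨆ α ∈ {α ∈ Γ | α ≠ 0 ∧ -α ∈ Γ},
    bracketSpan F L (wt F L H α ⊓ N.toSubmodule) (wt F L H (-α) ⊓ N.toSubmodule)

/-- The Lie subalgebra `N` of `L` is `(Γ, g)`-graded: conditions (Γ1), (Γ2) and (Γ3). -/
def IsGraded (N g H : LieSubalgebra F L) (Γ : Set (Module.Dual F H)) : Prop :=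
  IsPregraded F L N g H Γ ∧
    wt F L H 0 ⊓ N.toSubmodule = zeroPart F L N H Γ

/-- The set of weights of the `H`-module `L`. -/
def weightSet (H : LieSubalgebra F L) : Set (Module.Dual F H) :=
  {α | wt F L H α ≠ ⊥}

/-- `sl_m(F)` realized as the trace-zero `m × m` matrices. -/
def slL (m : ℕ) : LieSubalgebra F (Matrix (Fin m) (Fin m) F) where
  carrier := {x | Matrix.trace x = 0}
  add_mem' := by
    intro a b ha hb
    simp only [Set.mem_setOf_eq] at *
    simp [Matrix.trace_add, ha, hb]
  zero_mem' := by simp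
  smul_mem' := by
    intro c x hx
    simp only [Set.mem_setOf_eq] at *
    simp [Matrix.trace_smul, hx]
  lie_mem' := by
    intro x y hx hy
    simp only [Set.mem_setOf_eq] at *
    rw [Ring.lie_def]
    simp [Matrix.trace_sub, Matrix.trace_mul_comm x y]

end WG
namespace WG

section WeightSets

variable {W : Type*} [AddCommGroup W] {r : ℕ}

/-- `{±δ_i ± δ_j | i ≠ j}`. -/
def pmSet (δ : Fin r → W) : Set W :=
  {α | ∃ i j, i ≠ j ∧
    (α = δ i + δ j ∨ α = δ i - δ j ∨ α = -δ i + δ j ∨ α = -δ i - δ j)}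

/-- `{±δ_i}`. -/
def shortSet (δ : Fin r → W) : Set W :=
  {α | ∃ i, α = δ i ∨ α = -δ i}

/-- `{±2δ_i}`. -/
def longSet (δ : Fin r → W) : Set W :=
  {α | ∃ i, α = δ i + δ i ∨ α = -(δ i + δ i)}

/-- The weight set `{0, ±δ_i ± δ_j, ±δ_i, ±2δ_i | i ≠ j}`.  For the weights
`ε_1, …, ε_{n+1}` of the natural `sl_{n+1}`-module this is the set `Â_n`; for a basis
`δ_1, …, δ_r` it is the set `BC_r ∪ {0}`. -/
def hatSet (δ : Fin r → W) : Set W :=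
  {0} ∪ pmSet δ ∪ shortSet δ ∪ longSet δ

/-- The root system of type `A` in the weights `ε_i`: `{ε_i - ε_j | i ≠ j}`. -/
def aRoots (ε : Fin r → W) : Set W :=
  {α | ∃ i j, i ≠ j ∧ α = ε i - ε j}

/-- The root system of type `B_r`: `{±δ_i ± δ_j, ±δ_i | i ≠ j}`. -/
def bRoots (δ : Fin r → W) : Set W := pmSet δ ∪ shortSet δ

/-- The root system of type `C_r`: `{±δ_i ± δ_j, ±2δ_i | i ≠ j}`. -/
def cRoots (δ : Fin r → W) : Set W := pmSet δ ∪ longSet δ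

/-- The root system of type `D_r`: `{±δ_i ± δ_j | i ≠ j}`. -/
def dRoots (δ : Fin r → W) : Set W := pmSet δ

end WeightSets

section MatrixModules

open Matrix

variable (F : Type*) [Field F] (m : ℕ)

/-- The symmetric `m × m` matrices. -/
def symM : Submodule F (Matrix (Fin m) (Fin m) F) where
  carrier := {x | xᵀ = x}
  add_mem' := by
    intro a b ha hb
    simp only [Set.mem_setOf_eq] at *
    simp [Matrix.transpose_add, ha, hb]
  zero_mem' := by simp
  smul_mem' := by
    intro c x hx
    simp only [Set.mem_setOf_eq] at *
    simp [Matrix.transpose_smul, hx]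

/-- The skew-symmetric `m × m` matrices. -/
def skewM : Submodule F (Matrix (Fin m) (Fin m) F) where
  carrier := {x | xᵀ = -x}
  add_mem' := by
    intro a b ha hb
    simp only [Set.mem_setOf_eq] at *
    simp [Matrix.transpose_add, ha, hb]
    abel
  zero_mem' := by simp
  smul_mem' := by
    intro c x hx
    simp only [Set.mem_setOf_eq] at *
    simp [Matrix.transpose_smul, hx]

variable {F m}

/-- The action `x.s = xs + sxᵗ` of `sl_m` on symmetric matrices. -/
def symAct (x : Matrix (Fin m) (Fin m) F) (s : symM F m) : symM F m :=
  ⟨x * s + (s : Matrix (Fin m) (Fin m) F) * xᵀ, by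
    have hs : (s : Matrix (Fin m) (Fin m) F)ᵀ = s := s.2
    show (x * (s : Matrix (Fin m) (Fin m) F) + (s : Matrix (Fin m) (Fin m) F) * xᵀ)ᵀ = _
    simp [Matrix.transpose_add, Matrix.transpose_mul, hs, add_comm]⟩

/-- `xs - sxᵗ` is skew-symmetric for `s` symmetric. -/
def symActSkew (x : Matrix (Fin m) (Fin m) F) (s : symM F m) : skewM F m :=
  ⟨x * s - (s : Matrix (Fin m) (Fin m) F) * xᵀ, by
    have hs : (s : Matrix (Fin m) (Fin m) F)ᵀ = s := s.2
    show (x * (s : Matrix (Fin m) (Fin m) F) - (s : Matrix (Fin m) (Fin m) F) * xᵀ)ᵀ = _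
    simp [Matrix.transpose_sub, Matrix.transpose_mul, hs, neg_sub]⟩

/-- The action `x.λ = xλ + λxᵗ` of `sl_m` on skew-symmetric matrices. -/
def skewAct (x : Matrix (Fin m) (Fin m) F) (l : skewM F m) : skewM F m :=
  ⟨x * l + (l : Matrix (Fin m) (Fin m) F) * xᵀ, by
    have hl : (l : Matrix (Fin m) (Fin m) F)ᵀ = -l := l.2
    show (x * (l : Matrix (Fin m) (Fin m) F) + (l : Matrix (Fin m) (Fin m) F) * xᵀ)ᵀ = _
    simp only [Matrix.transpose_add, Matrix.transpose_mul, Matrix.transpose_transpose, hl,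
      Matrix.neg_mul, Matrix.mul_neg, neg_add_rev]
    try abel⟩

/-- `xλ - λxᵗ` is symmetric for `λ` skew-symmetric. -/
def skewActSym (x : Matrix (Fin m) (Fin m) F) (l : skewM F m) : symM F m :=
  ⟨x * l - (l : Matrix (Fin m) (Fin m) F) * xᵀ, by
    have hl : (l : Matrix (Fin m) (Fin m) F)ᵀ = -l := l.2
    show (x * (l : Matrix (Fin m) (Fin m) F) - (l : Matrix (Fin m) (Fin m) F) * xᵀ)ᵀ = _
    simp only [Matrix.transpose_sub, Matrix.transpose_mul, Matrix.transpose_transpose, hl,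
      Matrix.neg_mul, Matrix.mul_neg, sub_neg_eq_add, neg_sub]
    try abel⟩

/-- `s'x + xᵗs'` (symmetric). -/
def symActR (s' : symM F m) (x : Matrix (Fin m) (Fin m) F) : symM F m :=
  ⟨(s' : Matrix (Fin m) (Fin m) F) * x + xᵀ * s', by
    have hs : (s' : Matrix (Fin m) (Fin m) F)ᵀ = s' := s'.2
    show ((s' : Matrix (Fin m) (Fin m) F) * x + xᵀ * (s' : Matrix (Fin m) (Fin m) F))ᵀ = _
    simp [Matrix.transpose_add, Matrix.transpose_mul, hs, add_comm]⟩

/-- `s'x - xᵗs'` (skew-symmetric). -/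
def symActRSkew (s' : symM F m) (x : Matrix (Fin m) (Fin m) F) : skewM F m :=
  ⟨(s' : Matrix (Fin m) (Fin m) F) * x - xᵀ * s', by
    have hs : (s' : Matrix (Fin m) (Fin m) F)ᵀ = s' := s'.2
    show ((s' : Matrix (Fin m) (Fin m) F) * x - xᵀ * (s' : Matrix (Fin m) (Fin m) F))ᵀ = _
    simp [Matrix.transpose_sub, Matrix.transpose_mul, hs, neg_sub]⟩

/-- `λ'x + xᵗλ'` (skew-symmetric). -/
def skewActR (l' : skewM F m) (x : Matrix (Fin m) (Fin m) F) : skewM F m :=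
  ⟨(l' : Matrix (Fin m) (Fin m) F) * x + xᵀ * l', by
    have hl : (l' : Matrix (Fin m) (Fin m) F)ᵀ = -l' := l'.2
    show ((l' : Matrix (Fin m) (Fin m) F) * x + xᵀ * (l' : Matrix (Fin m) (Fin m) F))ᵀ = _
    simp only [Matrix.transpose_add, Matrix.transpose_mul, Matrix.transpose_transpose, hl,
      Matrix.neg_mul, Matrix.mul_neg, neg_add_rev]
    try abel⟩

/-- `λ'x - xᵗλ'` (symmetric). -/
def skewActRSym (l' : skewM F m) (x : Matrix (Fin m) (Fin m) F) : symM F m :=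
  ⟨(l' : Matrix (Fin m) (Fin m) F) * x - xᵀ * l', by
    have hl : (l' : Matrix (Fin m) (Fin m) F)ᵀ = -l' := l'.2
    show ((l' : Matrix (Fin m) (Fin m) F) * x - xᵀ * (l' : Matrix (Fin m) (Fin m) F))ᵀ = _
    simp only [Matrix.transpose_sub, Matrix.transpose_mul, Matrix.transpose_transpose, hl,
      Matrix.neg_mul, Matrix.mul_neg, sub_neg_eq_add, neg_sub]
    try abel⟩

end MatrixModules

end WG
namespace WG

open Matrix

set_option maxHeartbeats 1000000

/-- `(n+1) × (n+1)` matrices over `F`. -/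
abbrev MatN (F : Type*) [Field F] (n : ℕ) := Matrix (Fin (n + 1)) (Fin (n + 1)) F

theorem nsucc_ne_zero (F : Type*) [Field F] [CharZero F] (n : ℕ) :
    ((n + 1 : ℕ) : F) ≠ 0 :=
  Nat.cast_ne_zero.mpr (Nat.succ_ne_zero n)

section CoordHelpers

variable {F : Type*} [Field F] [CharZero F] {n : ℕ}

/-- The trace-zero projection `m ↦ m - (tr m / (n+1)) • 1`. -/
def projSl (m : MatN F n) : slL F (n + 1) :=
  ⟨m - (Matrix.trace m / ((n + 1 : ℕ) : F)) • (1 : MatN F n), by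
    show Matrix.trace _ = 0
    rw [Matrix.trace_sub, Matrix.trace_smul, Matrix.trace_one, Fintype.card_fin,
      smul_eq_mul, div_mul_cancel₀ _ (nsucc_ne_zero F n), sub_self]⟩

/-- `x ∘ y = xy + yx - (2/(n+1)) tr(xy) • 1`. -/
def circSl (x y : slL F (n + 1)) : slL F (n + 1) :=
  projSl ((x : MatN F n) * (y : MatN F n) + (y : MatN F n) * (x : MatN F n))

/-- `(x | y) = tr(xy)/(n+1)`. -/
def traceF (x y : MatN F n) : F :=
  Matrix.trace (x * y) / ((n + 1 : ℕ) : F)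

/-- `uvᵗ + vuᵗ` (symmetric). -/
def symVV (u v : Fin (n + 1) → F) : symM F (n + 1) :=
  ⟨Matrix.vecMulVec u v + Matrix.vecMulVec v u, by
    show _ᵀ = _
    ext i j
    simp only [Matrix.transpose_apply, Matrix.add_apply, Matrix.vecMulVec_apply]
    ring⟩

/-- `uvᵗ - vuᵗ` (skew-symmetric). -/
def skewVV (u v : Fin (n + 1) → F) : skewM F (n + 1) :=
  ⟨Matrix.vecMulVec u v - Matrix.vecMulVec v u, by
    show _ᵀ = _
    ext i j
    simp only [Matrix.transpose_apply, Matrix.sub_apply, Matrix.vecMulVec_apply,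
      Matrix.neg_apply]
    ring⟩

end CoordHelpers

section TotalMap

open scoped TensorProduct

variable {F : Type*} [Field F] [CharZero F] {n : ℕ}
variable {A B B' C C' E E' D L : Type*}
variable [AddCommGroup A] [Module F A] [AddCommGroup B] [Module F B]
variable [AddCommGroup B'] [Module F B'] [AddCommGroup C] [Module F C]
variable [AddCommGroup C'] [Module F C'] [AddCommGroup E] [Module F E]
variable [AddCommGroup E'] [Module F E'] [AddCommGroup D] [Module F D]
variable [LieRing L] [LieAlgebra F L]

/-- The total linear map
`(g ⊗ A) × (V ⊗ B) × (V' ⊗ B') × (S ⊗ C) × (S' ⊗ C') × (Λ ⊗ E) × (Λ' ⊗ E') × D → L`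
assembled from the structure maps of the decomposition (1.1). -/
noncomputable def totalMap
    (ιg : slL F (n + 1) →ₗ[F] A →ₗ[F] L)
    (ιV : (Fin (n + 1) → F) →ₗ[F] B →ₗ[F] L)
    (ιV' : (Fin (n + 1) → F) →ₗ[F] B' →ₗ[F] L)
    (ιS : symM F (n + 1) →ₗ[F] C →ₗ[F] L)
    (ιS' : symM F (n + 1) →ₗ[F] C' →ₗ[F] L)
    (ιE : skewM F (n + 1) →ₗ[F] E →ₗ[F] L)
    (ιE' : skewM F (n + 1) →ₗ[F] E' →ₗ[F] L)
    (ιD : D →ₗ[F] L) :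
    ((↥(slL F (n + 1)) ⊗[F] A) × ((Fin (n + 1) → F) ⊗[F] B) × ((Fin (n + 1) → F) ⊗[F] B') ×
      (↥(symM F (n + 1)) ⊗[F] C) × (↥(symM F (n + 1)) ⊗[F] C') ×
      (↥(skewM F (n + 1)) ⊗[F] E) × (↥(skewM F (n + 1)) ⊗[F] E') × D) →ₗ[F] L :=
  (TensorProduct.lift ιg).coprod <| (TensorProduct.lift ιV).coprod <|
    (TensorProduct.lift ιV').coprod <| (TensorProduct.lift ιS).coprod <|
    (TensorProduct.lift ιS').coprod <| (TensorProduct.lift ιE).coprod <|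
    (TensorProduct.lift ιE').coprod ιD

end TotalMap

end WG
namespace WG

open Matrix

set_option maxHeartbeats 2000000

/-- The coordinate setup for an `Â_n`-graded Lie algebra `L` (for `n ≥ 6`, or
`n ∈ {4,5}` together with the conditions (1.2), which here appear as the fields
`zero_LL`, `zero_L'L'`, `zero_LV` and `zero_L'V'`):
`L = g⊗A ⊕ V⊗B ⊕ V'⊗B' ⊕ S⊗C ⊕ S'⊗C' ⊕ Λ⊗E ⊕ Λ'⊗E' ⊕ D` with `g = sl_{n+1}`,
with the Lie bracket of `L` given on the components by the formulas (5.1). -/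
structure CoordSetup (F : Type*) [Field F] [CharZero F] (n : ℕ)
    (A B B' C C' E E' D L : Type*)
    [AddCommGroup A] [Module F A] [AddCommGroup B] [Module F B]
    [AddCommGroup B'] [Module F B'] [AddCommGroup C] [Module F C]
    [AddCommGroup C'] [Module F C'] [AddCommGroup E] [Module F E]
    [AddCommGroup E'] [Module F E'] [AddCommGroup D] [Module F D]
    [LieRing L] [LieAlgebra F L] : Type _ where
  -- the bilinear products among the multiplicity spaces (Table 3)
  circA : A →ₗ[F] A →ₗ[F] A            -- `a₁ ∘ a₂`
  brA : A →ₗ[F] A →ₗ[F] A              -- `[a₁, a₂]`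
  dA : A →ₗ[F] A →ₗ[F] D               -- `⟨a₁, a₂⟩`
  pAB : A →ₗ[F] B →ₗ[F] B              -- `(a, b)_B`
  pB'A : B' →ₗ[F] A →ₗ[F] B'           -- `(b', a)_{B'}`
  pBB'A : B →ₗ[F] B' →ₗ[F] A           -- `(b, b')_A`
  dBB' : B →ₗ[F] B' →ₗ[F] D            -- `⟨b, b'⟩`
  pBBC : B →ₗ[F] B →ₗ[F] C             -- `(b₁, b₂)_C`
  pBBE : B →ₗ[F] B →ₗ[F] E             -- `(b₁, b₂)_E`
  pB'B'C' : B' →ₗ[F] B' →ₗ[F] C'       -- `(b₁', b₂')_{C'}`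
  pB'B'E' : B' →ₗ[F] B' →ₗ[F] E'       -- `(b₁', b₂')_{E'}`
  pACC : A →ₗ[F] C →ₗ[F] C             -- `(a, c)_C`
  pACE : A →ₗ[F] C →ₗ[F] E             -- `(a, c)_E`
  pAEE : A →ₗ[F] E →ₗ[F] E             -- `(a, e)_E`
  pAEC : A →ₗ[F] E →ₗ[F] C             -- `(a, e)_C`
  pC'AC' : C' →ₗ[F] A →ₗ[F] C'         -- `(c', a)_{C'}`
  pC'AE' : C' →ₗ[F] A →ₗ[F] E'         -- `(c', a)_{E'}`
  pE'AE' : E' →ₗ[F] A →ₗ[F] E'         -- `(e', a)_{E'}`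
  pE'AC' : E' →ₗ[F] A →ₗ[F] C'         -- `(e', a)_{C'}`
  pCC'A : C →ₗ[F] C' →ₗ[F] A           -- `(c, c')_A`
  dCC' : C →ₗ[F] C' →ₗ[F] D            -- `⟨c, c'⟩`
  pEE'A : E →ₗ[F] E' →ₗ[F] A           -- `(e, e')_A`
  dEE' : E →ₗ[F] E' →ₗ[F] D            -- `⟨e, e'⟩`
  pCE'A : C →ₗ[F] E' →ₗ[F] A           -- `(c, e')_A`
  pC'EA : C' →ₗ[F] E →ₗ[F] A           -- `(c', e)_A`
  pC'B : C' →ₗ[F] B →ₗ[F] B'           -- `(c', b)_{B'}`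
  pE'B : E' →ₗ[F] B →ₗ[F] B'           -- `(e', b)_{B'}`
  pB'C : B' →ₗ[F] C →ₗ[F] B            -- `(b', c)_B`
  pB'E : B' →ₗ[F] E →ₗ[F] B            -- `(b', e)_B`
  dActA : D →ₗ[F] A →ₗ[F] A            -- the action of `D` on `A`
  dActB : D →ₗ[F] B →ₗ[F] B
  dActB' : D →ₗ[F] B' →ₗ[F] B'
  dActC : D →ₗ[F] C →ₗ[F] C
  dActC' : D →ₗ[F] C' →ₗ[F] C'
  dActE : D →ₗ[F] E →ₗ[F] E
  dActE' : D →ₗ[F] E' →ₗ[F] E'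
  dD : D →ₗ[F] D →ₗ[F] D
  -- the distinguished element `1 ∈ A` with `g = g ⊗ 1`
  one : A
  -- the components of the decomposition (1.1), as bilinear maps into `L`
  ιg : slL F (n + 1) →ₗ[F] A →ₗ[F] L
  ιV : (Fin (n + 1) → F) →ₗ[F] B →ₗ[F] L
  ιV' : (Fin (n + 1) → F) →ₗ[F] B' →ₗ[F] L
  ιS : symM F (n + 1) →ₗ[F] C →ₗ[F] L
  ιS' : symM F (n + 1) →ₗ[F] C' →ₗ[F] L
  ιE : skewM F (n + 1) →ₗ[F] E →ₗ[F] L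
  ιE' : skewM F (n + 1) →ₗ[F] E' →ₗ[F] L
  ιD : D →ₗ[F] L
  -- the decomposition (1.1) is a direct sum decomposition of `L`
  bij : Function.Bijective (totalMap ιg ιV ιV' ιS ιS' ιE ιE' ιD)
  -- the multiplication formulas (5.1)
  rel_gg : ∀ (x y : slL F (n + 1)) (a₁ a₂ : A),
    ⁅ιg x a₁, ιg y a₂⁆ =
      ιg (circSl x y) ((2⁻¹ : F) • brA a₁ a₂) + ιg ⁅x, y⁆ ((2⁻¹ : F) • circA a₁ a₂) +
        ιD (traceF (x : MatN F n) (y : MatN F n) • dA a₁ a₂)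
  rel_VV' : ∀ (u v' : Fin (n + 1) → F) (b : B) (b' : B'),
    ⁅ιV u b, ιV' v' b'⁆ =
      ιg (projSl (Matrix.vecMulVec u v')) (pBB'A b b') +
        ιD ((Matrix.trace (Matrix.vecMulVec u v') / ((n + 1 : ℕ) : F)) • dBB' b b')
  rel_SS' : ∀ (s s' : symM F (n + 1)) (c : C) (c' : C'),
    ⁅ιS s c, ιS' s' c'⁆ =
      ιg (projSl ((s : MatN F n) * (s' : MatN F n))) (pCC'A c c') +
        ιD (traceF (s : MatN F n) (s' : MatN F n) • dCC' c c')
  rel_LL' : ∀ (l l' : skewM F (n + 1)) (e : E) (e' : E'),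
    ⁅ιE l e, ιE' l' e'⁆ =
      ιg (projSl ((l : MatN F n) * (l' : MatN F n))) (pEE'A e e') +
        ιD (traceF (l : MatN F n) (l' : MatN F n) • dEE' e e')
  rel_VV : ∀ (u v : Fin (n + 1) → F) (b₁ b₂ : B),
    ⁅ιV u b₁, ιV v b₂⁆ =
      ιS (symVV u v) ((2⁻¹ : F) • pBBC b₁ b₂) + ιE (skewVV u v) ((2⁻¹ : F) • pBBE b₁ b₂)
  rel_V'V' : ∀ (u' v' : Fin (n + 1) → F) (b₁' b₂' : B'),
    ⁅ιV' u' b₁', ιV' v' b₂'⁆ =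
      ιS' (symVV u' v') ((2⁻¹ : F) • pB'B'C' b₁' b₂') +
        ιE' (skewVV u' v') ((2⁻¹ : F) • pB'B'E' b₁' b₂')
  rel_gS : ∀ (x : slL F (n + 1)) (a : A) (s : symM F (n + 1)) (c : C),
    ⁅ιg x a, ιS s c⁆ =
      ιS (symAct (x : MatN F n) s) ((2⁻¹ : F) • pACC a c) +
        ιE (symActSkew (x : MatN F n) s) ((2⁻¹ : F) • pACE a c)
  rel_gL : ∀ (x : slL F (n + 1)) (a : A) (l : skewM F (n + 1)) (e : E),
    ⁅ιg x a, ιE l e⁆ =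
      ιE (skewAct (x : MatN F n) l) ((2⁻¹ : F) • pAEE a e) +
        ιS (skewActSym (x : MatN F n) l) ((2⁻¹ : F) • pAEC a e)
  rel_S'g : ∀ (s' : symM F (n + 1)) (c' : C') (x : slL F (n + 1)) (a : A),
    ⁅ιS' s' c', ιg x a⁆ =
      ιS' (symActR s' (x : MatN F n)) ((2⁻¹ : F) • pC'AC' c' a) +
        ιE' (symActRSkew s' (x : MatN F n)) ((2⁻¹ : F) • pC'AE' c' a)
  rel_L'g : ∀ (l' : skewM F (n + 1)) (e' : E') (x : slL F (n + 1)) (a : A),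
    ⁅ιE' l' e', ιg x a⁆ =
      ιE' (skewActR l' (x : MatN F n)) ((2⁻¹ : F) • pE'AE' e' a) +
        ιS' (skewActRSym l' (x : MatN F n)) ((2⁻¹ : F) • pE'AC' e' a)
  rel_SL' : ∀ (s : symM F (n + 1)) (c : C) (l' : skewM F (n + 1)) (e' : E'),
    ⁅ιS s c, ιE' l' e'⁆ = ιg (projSl ((s : MatN F n) * (l' : MatN F n))) (pCE'A c e')
  rel_S'L : ∀ (s' : symM F (n + 1)) (c' : C') (l : skewM F (n + 1)) (e : E),
    ⁅ιS' s' c', ιE l e⁆ = ιg (projSl ((s' : MatN F n) * (l : MatN F n))) (pC'EA c' e)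
  rel_gV : ∀ (x : slL F (n + 1)) (a : A) (u : Fin (n + 1) → F) (b : B),
    ⁅ιg x a, ιV u b⁆ = ιV ((x : MatN F n) *ᵥ u) (pAB a b)
  rel_S'V : ∀ (s' : symM F (n + 1)) (c' : C') (u : Fin (n + 1) → F) (b : B),
    ⁅ιS' s' c', ιV u b⁆ = ιV' ((s' : MatN F n) *ᵥ u) (pC'B c' b)
  rel_L'V : ∀ (l' : skewM F (n + 1)) (e' : E') (u : Fin (n + 1) → F) (b : B),
    ⁅ιE' l' e', ιV u b⁆ = ιV' ((l' : MatN F n) *ᵥ u) (pE'B e' b)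
  rel_V'g : ∀ (u' : Fin (n + 1) → F) (b' : B') (x : slL F (n + 1)) (a : A),
    ⁅ιV' u' b', ιg x a⁆ = ιV' ((x : MatN F n)ᵀ *ᵥ u') (pB'A b' a)
  rel_V'S : ∀ (u' : Fin (n + 1) → F) (b' : B') (s : symM F (n + 1)) (c : C),
    ⁅ιV' u' b', ιS s c⁆ = ιV ((s : MatN F n) *ᵥ u') (pB'C b' c)
  rel_V'L : ∀ (u' : Fin (n + 1) → F) (b' : B') (l : skewM F (n + 1)) (e : E),
    ⁅ιV' u' b', ιE l e⁆ = -ιV ((l : MatN F n) *ᵥ u') (pB'E b' e)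
  -- the action of `D`
  rel_Dg : ∀ (d : D) (x : slL F (n + 1)) (a : A), ⁅ιD d, ιg x a⁆ = ιg x (dActA d a)
  rel_DV : ∀ (d : D) (u : Fin (n + 1) → F) (b : B), ⁅ιD d, ιV u b⁆ = ιV u (dActB d b)
  rel_DV' : ∀ (d : D) (u' : Fin (n + 1) → F) (b' : B'),
    ⁅ιD d, ιV' u' b'⁆ = ιV' u' (dActB' d b')
  rel_DS : ∀ (d : D) (s : symM F (n + 1)) (c : C), ⁅ιD d, ιS s c⁆ = ιS s (dActC d c)
  rel_DS' : ∀ (d : D) (s' : symM F (n + 1)) (c' : C'),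
    ⁅ιD d, ιS' s' c'⁆ = ιS' s' (dActC' d c')
  rel_DL : ∀ (d : D) (l : skewM F (n + 1)) (e : E), ⁅ιD d, ιE l e⁆ = ιE l (dActE d e)
  rel_DL' : ∀ (d : D) (l' : skewM F (n + 1)) (e' : E'),
    ⁅ιD d, ιE' l' e'⁆ = ιE' l' (dActE' d e')
  rel_DD : ∀ d₁ d₂ : D, ⁅ιD d₁, ιD d₂⁆ = ιD (dD d₁ d₂)
  -- all other products of homogeneous components are zero
  zero_SS : ∀ (s t : symM F (n + 1)) (c₁ c₂ : C), ⁅ιS s c₁, ιS t c₂⁆ = 0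
  zero_SL : ∀ (s : symM F (n + 1)) (c : C) (l : skewM F (n + 1)) (e : E),
    ⁅ιS s c, ιE l e⁆ = 0
  zero_LL : ∀ (l₁ l₂ : skewM F (n + 1)) (e₁ e₂ : E), ⁅ιE l₁ e₁, ιE l₂ e₂⁆ = 0
  zero_S'S' : ∀ (s' t' : symM F (n + 1)) (c₁' c₂' : C'), ⁅ιS' s' c₁', ιS' t' c₂'⁆ = 0
  zero_S'L' : ∀ (s' : symM F (n + 1)) (c' : C') (l' : skewM F (n + 1)) (e' : E'),
    ⁅ιS' s' c', ιE' l' e'⁆ = 0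
  zero_L'L' : ∀ (l₁' l₂' : skewM F (n + 1)) (e₁' e₂' : E'),
    ⁅ιE' l₁' e₁', ιE' l₂' e₂'⁆ = 0
  zero_SV : ∀ (s : symM F (n + 1)) (c : C) (u : Fin (n + 1) → F) (b : B),
    ⁅ιS s c, ιV u b⁆ = 0
  zero_LV : ∀ (l : skewM F (n + 1)) (e : E) (u : Fin (n + 1) → F) (b : B),
    ⁅ιE l e, ιV u b⁆ = 0
  zero_S'V' : ∀ (s' : symM F (n + 1)) (c' : C') (u' : Fin (n + 1) → F) (b' : B'),
    ⁅ιS' s' c', ιV' u' b'⁆ = 0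
  zero_L'V' : ∀ (l' : skewM F (n + 1)) (e' : E') (u' : Fin (n + 1) → F) (b' : B'),
    ⁅ιE' l' e', ιV' u' b'⁆ = 0
  -- `g = g ⊗ 1`: the subalgebra `g` acts through the distinguished element `1 ∈ A`
  one_gg : ∀ (x y : slL F (n + 1)) (a : A), ⁅ιg x one, ιg y a⁆ = ιg ⁅x, y⁆ a
  one_gV : ∀ (x : slL F (n + 1)) (u : Fin (n + 1) → F) (b : B),
    ⁅ιg x one, ιV u b⁆ = ιV ((x : MatN F n) *ᵥ u) b
  one_gV' : ∀ (x : slL F (n + 1)) (u' : Fin (n + 1) → F) (b' : B'),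
    ⁅ιg x one, ιV' u' b'⁆ = -ιV' ((x : MatN F n)ᵀ *ᵥ u') b'
  one_gS : ∀ (x : slL F (n + 1)) (s : symM F (n + 1)) (c : C),
    ⁅ιg x one, ιS s c⁆ = ιS (symAct (x : MatN F n) s) c
  one_gL : ∀ (x : slL F (n + 1)) (l : skewM F (n + 1)) (e : E),
    ⁅ιg x one, ιE l e⁆ = ιE (skewAct (x : MatN F n) l) e
  one_gS' : ∀ (x : slL F (n + 1)) (s' : symM F (n + 1)) (c' : C'),
    ⁅ιg x one, ιS' s' c'⁆ = -ιS' (symActR s' (x : MatN F n)) c'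
  one_gL' : ∀ (x : slL F (n + 1)) (l' : skewM F (n + 1)) (e' : E'),
    ⁅ιg x one, ιE' l' e'⁆ = -ιE' (skewActR l' (x : MatN F n)) e'

end WG
namespace WG

set_option maxHeartbeats 2000000

/-- The underlying space of the coordinate algebra `𝔞 = A⁺ ⊕ A⁻ ⊕ C ⊕ E ⊕ C' ⊕ E'`. -/
abbrev CoorA (A C E C' E' : Type*) := A × A × C × E × C' × E'

/-- The underlying space of the coordinate algebra
`𝔟 = 𝔞 ⊕ B ⊕ B' = A⁺ ⊕ A⁻ ⊕ C ⊕ E ⊕ C' ⊕ E' ⊕ B ⊕ B'`. -/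
abbrev CoorB (A C E C' E' B B' : Type*) := A × A × C × E × C' × E' × B × B'

section CoordAlgebra

variable {F : Type*} [Field F] [CharZero F] {n : ℕ}
variable {A B B' C C' E E' D L : Type*}
variable [AddCommGroup A] [Module F A] [AddCommGroup B] [Module F B]
variable [AddCommGroup B'] [Module F B'] [AddCommGroup C] [Module F C]
variable [AddCommGroup C'] [Module F C'] [AddCommGroup E] [Module F E]
variable [AddCommGroup E'] [Module F E'] [AddCommGroup D] [Module F D]
variable [LieRing L] [LieAlgebra F L]

/-- The multiplication `α₁α₂ = ½[α₁,α₂] + ½(α₁∘α₂)` of the coordinate algebra `𝔟`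
(Tables 4 and 5). -/
def bMul (S : CoordSetup F n A B B' C C' E E' D L) :
    CoorB A C E C' E' B B' → CoorB A C E C' E' B B' → CoorB A C E C' E' B B' :=
  fun x y =>
    match x, y with
    | (a1p, a1m, c1, e1, c1', e1', b1, b1'), (a2p, a2m, c2, e2, c2', e2', b2, b2') =>
      ((2⁻¹ : F) • (S.circA a1p a2p + S.circA a1m a2m + S.brA a1p a2m + S.brA a1m a2p +
          S.pCC'A c1 c2' + S.pCC'A c2 c1' + S.pEE'A e1 e2' + S.pEE'A e2 e1' +
          S.pCE'A c1 e2' - S.pCE'A c2 e1' + S.pC'EA c1' e2 - S.pC'EA c2' e1 +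
          S.pBB'A b1 b2' + S.pBB'A b2 b1'),
       (2⁻¹ : F) • (S.brA a1p a2p + S.brA a1m a2m + S.circA a1p a2m + S.circA a1m a2p +
          S.pCC'A c1 c2' - S.pCC'A c2 c1' + S.pEE'A e1 e2' - S.pEE'A e2 e1' +
          S.pCE'A c1 e2' + S.pCE'A c2 e1' + S.pC'EA c1' e2 + S.pC'EA c2' e1 +
          S.pBB'A b1 b2' - S.pBB'A b2 b1'),
       (2⁻¹ : F) • (S.pACC a1p c2 + S.pACC a1m c2 + S.pACC a2p c1 - S.pACC a2m c1 +
          S.pAEC a1p e2 + S.pAEC a1m e2 - S.pAEC a2p e1 + S.pAEC a2m e1 +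
          S.pBBC b1 b2),
       (2⁻¹ : F) • (S.pACE a1p c2 + S.pACE a1m c2 - S.pACE a2p c1 + S.pACE a2m c1 +
          S.pAEE a1p e2 + S.pAEE a1m e2 + S.pAEE a2p e1 - S.pAEE a2m e1 +
          S.pBBE b1 b2),
       (2⁻¹ : F) • (S.pC'AC' c1' a2m + S.pC'AC' c1' a2p - S.pC'AC' c2' a1m +
          S.pC'AC' c2' a1p + S.pE'AC' e1' a2m + S.pE'AC' e1' a2p + S.pE'AC' e2' a1m -
          S.pE'AC' e2' a1p + S.pB'B'C' b1' b2'),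
       (2⁻¹ : F) • (S.pC'AE' c1' a2m + S.pC'AE' c1' a2p + S.pC'AE' c2' a1m -
          S.pC'AE' c2' a1p + S.pE'AE' e1' a2m + S.pE'AE' e1' a2p - S.pE'AE' e2' a1m +
          S.pE'AE' e2' a1p + S.pB'B'E' b1' b2'),
       S.pAB a1p b2 + S.pAB a1m b2 + S.pAB a2p b1 - S.pAB a2m b1 +
         S.pB'C b1' c2 + S.pB'E b1' e2 - S.pB'C b2' c1 + S.pB'E b2' e1,
       S.pC'B c1' b2 + S.pE'B e1' b2 - S.pC'B c2' b1 + S.pE'B e2' b1 +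
         S.pB'A b1' a2p + S.pB'A b1' a2m + S.pB'A b2' a1p - S.pB'A b2' a1m)

/-- The multiplication of the coordinate algebra `𝔞` (Table 4): the restriction of the
multiplication of `𝔟`. -/
def aMul (S : CoordSetup F n A B B' C C' E E' D L) :
    CoorA A C E C' E' → CoorA A C E C' E' → CoorA A C E C' E' :=
  fun x y =>
    match x, y with
    | (a1p, a1m, c1, e1, c1', e1'), (a2p, a2m, c2, e2, c2', e2') =>
      ((2⁻¹ : F) • (S.circA a1p a2p + S.circA a1m a2m + S.brA a1p a2m + S.brA a1m a2p +
          S.pCC'A c1 c2' + S.pCC'A c2 c1' + S.pEE'A e1 e2' + S.pEE'A e2 e1' +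
          S.pCE'A c1 e2' - S.pCE'A c2 e1' + S.pC'EA c1' e2 - S.pC'EA c2' e1),
       (2⁻¹ : F) • (S.brA a1p a2p + S.brA a1m a2m + S.circA a1p a2m + S.circA a1m a2p +
          S.pCC'A c1 c2' - S.pCC'A c2 c1' + S.pEE'A e1 e2' - S.pEE'A e2 e1' +
          S.pCE'A c1 e2' + S.pCE'A c2 e1' + S.pC'EA c1' e2 + S.pC'EA c2' e1),
       (2⁻¹ : F) • (S.pACC a1p c2 + S.pACC a1m c2 + S.pACC a2p c1 - S.pACC a2m c1 +
          S.pAEC a1p e2 + S.pAEC a1m e2 - S.pAEC a2p e1 + S.pAEC a2m e1),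
       (2⁻¹ : F) • (S.pACE a1p c2 + S.pACE a1m c2 - S.pACE a2p c1 + S.pACE a2m c1 +
          S.pAEE a1p e2 + S.pAEE a1m e2 + S.pAEE a2p e1 - S.pAEE a2m e1),
       (2⁻¹ : F) • (S.pC'AC' c1' a2m + S.pC'AC' c1' a2p - S.pC'AC' c2' a1m +
          S.pC'AC' c2' a1p + S.pE'AC' e1' a2m + S.pE'AC' e1' a2p + S.pE'AC' e2' a1m -
          S.pE'AC' e2' a1p),
       (2⁻¹ : F) • (S.pC'AE' c1' a2m + S.pC'AE' c1' a2p + S.pC'AE' c2' a1m -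
          S.pC'AE' c2' a1p + S.pE'AE' e1' a2m + S.pE'AE' e1' a2p - S.pE'AE' e2' a1m +
          S.pE'AE' e2' a1p))

/-- The element `1⁺ ∈ 𝔞`. -/
def oneA (S : CoordSetup F n A B B' C C' E E' D L) : CoorA A C E C' E' :=
  (S.one, 0, 0, 0, 0, 0)

/-- The element `1⁺ ∈ 𝔟`. -/
def oneB (S : CoordSetup F n A B B' C C' E E' D L) : CoorB A C E C' E' B B' :=
  (S.one, 0, 0, 0, 0, 0, 0, 0)

/-- The linear transformation `γ` of `𝔞`: identity on `A⁺, E, E'` and `-1` on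
`A⁻, C, C'`. -/
def gammaA : CoorA A C E C' E' → CoorA A C E C' E' :=
  fun x => match x with
  | (ap, am, c, e, c', e') => (ap, -am, -c, e, -c', e')

/-- The linear transformation `η` of `𝔟`: it restricts to `γ` on `𝔞` and fixes `B` and
`B'`. -/
def etaB : CoorB A C E C' E' B B' → CoorB A C E C' E' B B' :=
  fun x => match x with
  | (ap, am, c, e, c', e', b, b') => (ap, -am, -c, e, -c', e', b, b')

/-- The embedding `𝔞 → 𝔟`. -/
def iaB : CoorA A C E C' E' → CoorB A C E C' E' B B' :=
  fun x => match x with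
  | (ap, am, c, e, c', e') => (ap, am, c, e, c', e', 0, 0)

/-- The element `b + b'` of `B ⊕ B' ⊆ 𝔟`. -/
def bElem (b : B) (b' : B') : CoorB A C E C' E' B B' :=
  (0, 0, 0, 0, 0, 0, b, b')

end CoordAlgebra

end WG
/-!
The symmetry properties of Table 3 that `η` needs all come from antisymmetry of the bracket
of `L`: expanding `⁅X, Y⁆ + ⁅Y, X⁆ = 0` by (5.1) for well-chosen matrices and using that the
decomposition of `L` is direct shows that `[·,·]_A` and `(·,·)_C`, `(·,·)_{C'}` are skew while
`∘_A` and `(·,·)_E`, `(·,·)_{E'}` are symmetric.  With these, `η(xy) = η(y)η(x)` is a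
componentwise identity, and `η² = id` is clear.
-/

namespace WG

open Matrix TensorProduct

theorem eq_zero_of_tmul_eq_zero {K V M : Type*} [Field K] [AddCommGroup V] [Module K V]
    [AddCommGroup M] [Module K M] {z : V} (hz : z ≠ 0) {a : M} (h : z ⊗ₜ[K] a = 0) :
    a = 0 := by
  obtain ⟨f, hf⟩ := Module.Projective.exists_dual_ne_zero K hz
  have := congrArg (TensorProduct.lift ((LinearMap.lsmul K M).comp f)) h
  simpa [hf] using this

section MatrixFacts

variable {F : Type*} [Field F] [CharZero F] {n : ℕ}

theorem projSl_apply_of_ne (m : MatN F n) {i j : Fin (n + 1)} (h : i ≠ j) :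
    (projSl m : MatN F n) i j = m i j := by
  simp [projSl, one_apply_ne h]

theorem circSl_comm (x y : slL F (n + 1)) : circSl x y = circSl y x :=
  congrArg projSl (add_comm _ _)

/-- The witness `x = E_ij + E_jk` has `x² = E_ik`, so `x ∘ x = 2 E_ik`. -/
theorem exists_circSl_self_ne_zero (hn : 2 ≤ n) : ∃ x : slL F (n + 1), circSl x x ≠ 0 := by
  set i : Fin (n + 1) := ⟨0, by omega⟩
  set j : Fin (n + 1) := ⟨1, by omega⟩
  set k : Fin (n + 1) := ⟨2, by omega⟩
  have hij : i ≠ j := by simp [i, j, Fin.ext_iff]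
  have hjk : j ≠ k := by simp [j, k, Fin.ext_iff]
  have hik : i ≠ k := by simp [i, k, Fin.ext_iff]
  refine ⟨⟨single i j 1 + single j k 1, by simp [slL, trace_add, hij, hjk]⟩, fun h => ?_⟩
  have := congrArg (fun x : slL F (n + 1) => (x : MatN F n) i k) h
  simp [circSl, projSl_apply_of_ne _ hik, add_mul, mul_add, hij, hij.symm] at this

theorem exists_circSl_eq_zero_lie_ne_zero (hn : 1 ≤ n) :
    ∃ x y : slL F (n + 1), circSl x y = 0 ∧ ⁅x, y⁆ ≠ 0 := by
  set i : Fin (n + 1) := ⟨0, by omega⟩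
  set j : Fin (n + 1) := ⟨1, by omega⟩
  have hij : i ≠ j := by simp [i, j, Fin.ext_iff]
  refine ⟨⟨single i i 1 - single j j 1, by simp [slL, trace_sub]⟩,
    ⟨single i j 1, by simp [slL, hij]⟩, ?_, fun h => ?_⟩
  · ext : 1
    simp [circSl, projSl, sub_mul, mul_sub, hij.symm]
  · have := congrArg (fun x : slL F (n + 1) => (x : MatN F n) i j) h
    simp [Ring.lie_def, sub_mul, mul_sub, hij.symm] at this

theorem exists_symVV_ne_zero_skewVV_ne_zero (hn : 1 ≤ n) :
    ∃ u v : Fin (n + 1) → F, symVV u v ≠ 0 ∧ skewVV u v ≠ 0 := by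
  set i : Fin (n + 1) := ⟨0, by omega⟩
  set j : Fin (n + 1) := ⟨1, by omega⟩
  have hij : i ≠ j := by simp [i, j, Fin.ext_iff]
  refine ⟨Pi.single i 1, Pi.single j 1, fun h => ?_, fun h => ?_⟩
  · have := congrArg (fun s : symM F (n + 1) => (s : MatN F n) i j) h
    simp [symVV, vecMulVec_apply, hij, hij.symm] at this
  · have := congrArg (fun l : skewM F (n + 1) => (l : MatN F n) i j) h
    simp [skewVV, vecMulVec_apply, hij, hij.symm] at this

omit [CharZero F] in
theorem symVV_comm (u v : Fin (n + 1) → F) : symVV v u = symVV u v :=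
  Subtype.ext (add_comm _ _)

omit [CharZero F] in
theorem skewVV_comm (u v : Fin (n + 1) → F) : skewVV v u = -skewVV u v :=
  Subtype.ext (neg_sub _ _).symm

theorem skew_and_symm_of_lie_eq {B C E L : Type*} [AddCommGroup B] [Module F B]
    [AddCommGroup C] [Module F C] [AddCommGroup E] [Module F E] [LieRing L] [LieAlgebra F L]
    (ιV : (Fin (n + 1) → F) →ₗ[F] B →ₗ[F] L) (ιS : symM F (n + 1) →ₗ[F] C →ₗ[F] L)
    (ιE : skewM F (n + 1) →ₗ[F] E →ₗ[F] L) (p : B →ₗ[F] B →ₗ[F] C) (q : B →ₗ[F] B →ₗ[F] E)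
    (hrel : ∀ u v b₁ b₂, ⁅ιV u b₁, ιV v b₂⁆ =
      ιS (symVV u v) ((2⁻¹ : F) • p b₁ b₂) + ιE (skewVV u v) ((2⁻¹ : F) • q b₁ b₂))
    (hind : ∀ {s l c e}, s ≠ 0 → l ≠ 0 → ιS s c + ιE l e = 0 → c = 0 ∧ e = 0)
    (hn : 1 ≤ n) (b₁ b₂ : B) : p b₁ b₂ = -p b₂ b₁ ∧ q b₁ b₂ = q b₂ b₁ := by
  obtain ⟨u, v, hs, hl⟩ := exists_symVV_ne_zero_skewVV_ne_zero (F := F) hn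
  have h := neg_eq_iff_add_eq_zero.mp (lie_skew (ιV u b₁) (ιV v b₂))
  rw [hrel, hrel, symVV_comm, skewVV_comm] at h
  obtain ⟨hc, he⟩ := hind hs hl (c := (2⁻¹ : F) • (p b₁ b₂ + p b₂ b₁))
    (e := (2⁻¹ : F) • (q b₁ b₂ - q b₂ b₁)) (by
      simp only [smul_add, smul_sub, map_add, map_sub, map_neg, LinearMap.neg_apply] at h ⊢
      rw [← h]; abel)
  simp only [smul_eq_zero, inv_eq_zero, two_ne_zero, false_or] at hc he
  exact ⟨eq_neg_of_add_eq_zero_left hc, sub_eq_zero.mp he⟩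

end MatrixFacts

section Setup

variable {F : Type*} [Field F] [CharZero F] {n : ℕ}
variable {A B B' C C' E E' D L : Type*}
variable [AddCommGroup A] [Module F A] [AddCommGroup B] [Module F B]
variable [AddCommGroup B'] [Module F B'] [AddCommGroup C] [Module F C]
variable [AddCommGroup C'] [Module F C'] [AddCommGroup E] [Module F E]
variable [AddCommGroup E'] [Module F E'] [AddCommGroup D] [Module F D]
variable [LieRing L] [LieAlgebra F L]

namespace CoordSetup

variable (S : CoordSetup F n A B B' C C' E E' D L)

theorem eq_zero_of_ιg_add_ιD {z : slL F (n + 1)} (hz : z ≠ 0) {a : A} {d : D}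
    (h : S.ιg z a + S.ιD d = 0) : a = 0 := by
  have := S.bij.injective (a₁ := (z ⊗ₜ a, 0, 0, 0, 0, 0, 0, d)) (a₂ := 0)
    (by simpa [totalMap] using h)
  exact eq_zero_of_tmul_eq_zero hz (congrArg Prod.fst this)

theorem eq_zero_of_ιS_add_ιE {s : symM F (n + 1)} {l : skewM F (n + 1)} {c : C} {e : E}
    (hs : s ≠ 0) (hl : l ≠ 0) (h : S.ιS s c + S.ιE l e = 0) : c = 0 ∧ e = 0 := by
  have := S.bij.injective (a₁ := (0, 0, 0, s ⊗ₜ c, 0, l ⊗ₜ e, 0, 0)) (a₂ := 0)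
    (by simpa [totalMap] using h)
  simp only [Prod.ext_iff] at this
  exact ⟨eq_zero_of_tmul_eq_zero hs this.2.2.2.1, eq_zero_of_tmul_eq_zero hl this.2.2.2.2.2.1⟩

theorem eq_zero_of_ιS'_add_ιE' {s : symM F (n + 1)} {l : skewM F (n + 1)} {c : C'} {e : E'}
    (hs : s ≠ 0) (hl : l ≠ 0) (h : S.ιS' s c + S.ιE' l e = 0) : c = 0 ∧ e = 0 := by
  have := S.bij.injective (a₁ := (0, 0, 0, 0, s ⊗ₜ c, 0, l ⊗ₜ e, 0)) (a₂ := 0)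
    (by simpa [totalMap] using h)
  simp only [Prod.ext_iff] at this
  exact ⟨eq_zero_of_tmul_eq_zero hs this.2.2.2.2.1,
    eq_zero_of_tmul_eq_zero hl this.2.2.2.2.2.2.1⟩

theorem lie_ιg_add_lie_ιg_swap (x y : slL F (n + 1)) (a₁ a₂ : A) :
    S.ιg (circSl x y) ((2⁻¹ : F) • (S.brA a₁ a₂ + S.brA a₂ a₁)) +
      S.ιg ⁅x, y⁆ ((2⁻¹ : F) • (S.circA a₁ a₂ - S.circA a₂ a₁)) +
      S.ιD (traceF (x : MatN F n) y • S.dA a₁ a₂ + traceF (y : MatN F n) x • S.dA a₂ a₁) =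
    0 := by
  have h := neg_eq_iff_add_eq_zero.mp (lie_skew (S.ιg x a₁) (S.ιg y a₂))
  rw [S.rel_gg, S.rel_gg, circSl_comm y x, ← lie_skew y x] at h
  simp only [smul_add, smul_sub, map_add, map_sub, map_neg, LinearMap.neg_apply] at h ⊢
  rw [← h]; abel

theorem brA_swap (hn : 2 ≤ n) (a₁ a₂ : A) : S.brA a₁ a₂ = -S.brA a₂ a₁ := by
  obtain ⟨x, hx⟩ := exists_circSl_self_ne_zero (F := F) hn
  have h := S.lie_ιg_add_lie_ιg_swap x x a₁ a₂
  rw [lie_self, map_zero, LinearMap.zero_apply, add_zero] at h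
  have h0 := S.eq_zero_of_ιg_add_ιD hx h
  simp only [smul_eq_zero, inv_eq_zero, two_ne_zero, false_or] at h0
  exact eq_neg_of_add_eq_zero_left h0

theorem circA_swap (hn : 1 ≤ n) (a₁ a₂ : A) : S.circA a₁ a₂ = S.circA a₂ a₁ := by
  obtain ⟨x, y, hxy, hlie⟩ := exists_circSl_eq_zero_lie_ne_zero (F := F) hn
  have h := S.lie_ιg_add_lie_ιg_swap x y a₁ a₂
  rw [hxy, map_zero, LinearMap.zero_apply, zero_add] at h
  have h0 := S.eq_zero_of_ιg_add_ιD hlie h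
  simp only [smul_eq_zero, inv_eq_zero, two_ne_zero, false_or] at h0
  exact sub_eq_zero.mp h0

theorem pBBC_swap_and_pBBE_swap (hn : 1 ≤ n) (b₁ b₂ : B) :
    S.pBBC b₁ b₂ = -S.pBBC b₂ b₁ ∧ S.pBBE b₁ b₂ = S.pBBE b₂ b₁ :=
  skew_and_symm_of_lie_eq S.ιV S.ιS S.ιE S.pBBC S.pBBE S.rel_VV S.eq_zero_of_ιS_add_ιE hn b₁ b₂

theorem pB'B'C'_swap_and_pB'B'E'_swap (hn : 1 ≤ n) (b₁ b₂ : B') :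
    S.pB'B'C' b₁ b₂ = -S.pB'B'C' b₂ b₁ ∧ S.pB'B'E' b₁ b₂ = S.pB'B'E' b₂ b₁ :=
  skew_and_symm_of_lie_eq S.ιV' S.ιS' S.ιE' S.pB'B'C' S.pB'B'E' S.rel_V'V'
    S.eq_zero_of_ιS'_add_ιE' hn b₁ b₂

end CoordSetup

theorem etaB_bMul (S : CoordSetup F n A B B' C C' E E' D L) (hn : 2 ≤ n)
    (x y : CoorB A C E C' E' B B') : etaB (bMul S x y) = bMul S (etaB y) (etaB x) := by
  have hbr := S.brA_swap hn
  have hcirc := S.circA_swap (by omega)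
  have hB := S.pBBC_swap_and_pBBE_swap (by omega)
  have hB' := S.pB'B'C'_swap_and_pB'B'E'_swap (by omega)
  obtain ⟨a1p, a1m, c1, e1, c1', e1', b1, b1'⟩ := x
  obtain ⟨a2p, a2m, c2, e2, c2', e2', b2, b2'⟩ := y
  simp only [bMul, etaB, map_neg, LinearMap.neg_apply, neg_neg, Prod.mk.injEq]
  refine ⟨?_, ?_, ?_, ?_, ?_, ?_, ?_, ?_⟩
  · rw [hcirc a2p a1p, hcirc a2m a1m, hbr a2p a1m, hbr a2m a1p]; module
  · rw [hbr a2p a1p, hbr a2m a1m, hcirc a2p a1m, hcirc a2m a1p]; module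
  · rw [(hB b2 b1).1]; module
  · rw [(hB b2 b1).2]; module
  · rw [(hB' b2' b1').1]; module
  · rw [(hB' b2' b1').2]; module
  · module
  · module

end Setup

theorem etaB_involutive {A B B' C C' E E' : Type*} [AddCommGroup A] [AddCommGroup C]
    [AddCommGroup C'] : Function.Involutive (etaB : CoorB A C E C' E' B B' → _) := by
  rintro ⟨ap, am, c, e, c', e', b, b'⟩
  simp only [etaB, neg_neg]

end WG

/-- Under the stated coordinate setup, the linear transformation
`η : 𝔟 → 𝔟` defined by `η(α) = γ(α)` for `α ∈ 𝔞`, `η(b) = b` for `b ∈ B` and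
`η(b') = b'` for `b' ∈ B'` is an antiautomorphism of order `2` of the algebra
`𝔟 = 𝔞 ⊕ B ⊕ B'`. -/
theorem stmt16 {F : Type*} [Field F] [CharZero F] (n : ℕ) (hn : 4 ≤ n)
    {A B B' C C' E E' D L : Type*}
    [AddCommGroup A] [Module F A] [AddCommGroup B] [Module F B]
    [AddCommGroup B'] [Module F B'] [AddCommGroup C] [Module F C]
    [AddCommGroup C'] [Module F C'] [AddCommGroup E] [Module F E]
    [AddCommGroup E'] [Module F E'] [AddCommGroup D] [Module F D]
    [LieRing L] [LieAlgebra F L]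
    (S : WG.CoordSetup F n A B B' C C' E E' D L) :
    (∀ x y : WG.CoorB A C E C' E' B B',
      WG.etaB (WG.bMul S x y) = WG.bMul S (WG.etaB y) (WG.etaB x)) ∧
    (∀ x : WG.CoorB A C E C' E' B B', WG.etaB (WG.etaB x) = x) :=
  ⟨WG.etaB_bMul S (by omega), WG.etaB_involutive⟩
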